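/- arXiv:1606.04482 — 2 statements merged into one kernel-verified Lean document; each statement's English description precedes it below -/
import Mathlib

section
/- Let q and q₀ be positive integers, let χ be a Dirichlet character modulo q₀q that is not induced by any Dirichlet character modulo q, and let A be an integer with gcd(A, q) = 1. Then ∑_{A' mod q₀q, A' ≡ A (mod q)} χ(A') = 0, where the sum runs over all residue classes A' modulo q₀q that reduce to A modulo q. -/
/-!
Since `χ` does not factor through level `q`, it is nontrivial on the kernel of the reduction
`(ZMod (q₀ * q))ˣ → (ZMod q)ˣ`: there is a unit `u ≡ 1 (mod q)` with `χ u ≠ 1`.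
Multiplication by `u` permutes the residues `A' ≡ A (mod q)`, so the sum `S` satisfies
`χ u * S = S`, whence `S = 0`.
-/

open Finset

lemma ZMod.sum_range_natCast {M : Type*} [AddCommMonoid M] {n : ℕ} [NeZero n]
    (f : ZMod n → M) : ∑ a ∈ range n, f a = ∑ x : ZMod n, f x :=
  sum_nbij' (fun a => (a : ZMod n)) ZMod.val (fun _ _ => mem_univ _)
    (fun x _ => mem_range.mpr x.val_lt) (fun _ ha => ZMod.val_natCast_of_lt (mem_range.mp ha))
    (fun x _ => ZMod.natCast_zmod_val x) (fun _ _ => rfl)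

lemma MulChar.sum_eq_zero_of_mul_mem_iff {R R' : Type*} [CommMonoid R] [CommRing R']
    [NoZeroDivisors R'] (χ : MulChar R R') {s : Finset R} (u : Rˣ)
    (hs : ∀ x, x ∈ s ↔ ↑u * x ∈ s) (hu : χ u ≠ 1) : ∑ x ∈ s, χ x = 0 := by
  have hinv : χ u * ∑ x ∈ s, χ x = ∑ x ∈ s, χ x := by
    rw [mul_sum]
    exact sum_bijective ((u : R) * ·) (Units.mulLeft_bijective u) hs
      fun x _ => (map_mul χ (u : R) x).symm
  exact (mul_left_eq_self₀.mp hinv).resolve_left hu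

namespace DirichletCharacter

variable {R : Type*} {N q : ℕ}

lemma FactorsThrough.exists_apply_natCast_eq [CommMonoidWithZero R]
    {χ : DirichletCharacter R N} (h : χ.FactorsThrough q) :
    ∃ χ' : DirichletCharacter R q, ∀ n : ℕ, n.Coprime N → χ n = χ' n := by
  obtain ⟨hd, χ', rfl⟩ := h
  refine ⟨χ', fun n hn => ?_⟩
  simpa using changeLevel_eq_cast_of_dvd' χ' hd (Nat.isCoprime_iff_coprime.mpr hn)

lemma exists_unitsMap_eq_one_apply_ne_one [CommMonoidWithZero R] [NeZero N]
    {χ : DirichletCharacter R N} (hd : q ∣ N) (h : ¬ χ.FactorsThrough q) :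
    ∃ u : (ZMod N)ˣ, ZMod.unitsMap hd u = 1 ∧ χ u ≠ 1 := by
  obtain ⟨u, hu_ker, hu_χ⟩ :=
    SetLike.not_le_iff_exists.mp (mt (factorsThrough_iff_ker_unitsMap hd).mpr h)
  exact ⟨u, hu_ker, fun h1 => hu_χ (Units.ext h1)⟩

lemma sum_castHom_eq_eq_zero_of_not_factorsThrough [CommRing R] [NoZeroDivisors R] [NeZero N]
    {χ : DirichletCharacter R N} (hd : q ∣ N) (h : ¬ χ.FactorsThrough q) (a : ZMod q) :
    ∑ x with ZMod.castHom hd (ZMod q) x = a, χ x = 0 := by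
  obtain ⟨u, hu_one, hu_χ⟩ := exists_unitsMap_eq_one_apply_ne_one hd h
  have hu : ZMod.castHom hd (ZMod q) u = 1 := by
    simpa [ZMod.unitsMap_def] using congrArg Units.val hu_one
  exact χ.sum_eq_zero_of_mul_mem_iff u
    (fun x => by simp only [mem_filter, mem_univ, true_and, map_mul, hu, one_mul]) hu_χ

end DirichletCharacter

theorem stmt_13_general (q q₀ : ℕ)
    (χ : DirichletCharacter ℂ (q₀ * q))
    (hχ : ¬ ∃ χ' : DirichletCharacter ℂ q, ∀ n : ℕ, Nat.Coprime n (q₀ * q) →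
      χ ((n : ℕ) : ZMod (q₀ * q)) = χ' ((n : ℕ) : ZMod q))
    (A : ℤ) :
    ∑ a ∈ Finset.range (q₀ * q),
        (if ((a : ℤ) : ZMod q) = (A : ZMod q) then χ ((a : ℕ) : ZMod (q₀ * q)) else 0) = 0 := by
  rcases Nat.eq_zero_or_pos (q₀ * q) with hN | hN
  · simp [hN]
  have : NeZero (q₀ * q) := ⟨hN.ne'⟩
  have hd : q ∣ q₀ * q := dvd_mul_left q q₀
  have hsummand (a : ℕ) : (if ((a : ℤ) : ZMod q) = (A : ZMod q) then χ a else 0) =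
      if ZMod.castHom hd (ZMod q) a = A then χ a else 0 := by
    simp
  rw [sum_congr rfl fun a _ => hsummand a,
    ZMod.sum_range_natCast (fun x => if ZMod.castHom hd (ZMod q) x = A then χ x else 0),
    ← sum_filter]
  exact DirichletCharacter.sum_castHom_eq_eq_zero_of_not_factorsThrough hd
    (mt DirichletCharacter.FactorsThrough.exists_apply_natCast_eq hχ) A

/-- Lemma (vanishing of a restricted character sum): if `χ` is a Dirichlet
character mod `q₀q` that is not induced by any character mod `q` (i.e. it does
not agree with any character mod `q` on all integers coprime to `q₀q`), and
`gcd(A, q) = 1`, then `∑_{A' mod q₀q, A' ≡ A (mod q)} χ(A') = 0`. -/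
theorem stmt_13 (q q₀ : ℕ) (hq : 0 < q) (hq₀ : 0 < q₀)
    (χ : DirichletCharacter ℂ (q₀ * q))
    (hχ : ¬ ∃ χ' : DirichletCharacter ℂ q, ∀ n : ℕ, Nat.Coprime n (q₀ * q) →
      χ ((n : ℕ) : ZMod (q₀ * q)) = χ' ((n : ℕ) : ZMod q))
    (A : ℤ) (hA : Int.gcd (q : ℤ) A = 1) :
    ∑ a ∈ Finset.range (q₀ * q),
        (if ((a : ℤ) : ZMod q) = (A : ZMod q) then χ ((a : ℕ) : ZMod (q₀ * q)) else 0) = 0 :=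
  stmt_13_general q q₀ χ hχ A
end

section
/- Let a be a function assigning to each prime p a real number a_p ∈ [0,2], and suppose that for every α ∈ [0,2] the Sato–Tate law holds in the form lim_{x→∞} (log x / x)·#{p ≤ x prime : a_p ≤ α} = μ(α), where μ(α) = (2/π)·arcsin(α/2) + (1/π)·sin(2·arcsin(α/2)). Then liminf_{x→∞} (1/x)·∑_{p ≤ x} a_p·log p ≥ 8/(3π); in particular the liminf is strictly greater than 2/π. -/
/-!
Discretise `a_p` in layers of height `h = 2 / n`: `a_p ≥ h · #{1 ≤ i < n : i h < a_p}`. Keep only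
the primes `p > x^θ` (`θ < 1`), for which `log p ≥ θ log x`; the at most `x^θ` others are
negligible against `x / log x`. By the Sato–Tate law, `(log x / x) · #{p ≤ x : a_p > i h}` tends to
`1 - μ(i h)`, so the liminf is at least `θ h ∑_{1 ≤ i < n} (1 - μ(i h))`. Since `1 - μ` decreases,
this Riemann sum is at least `θ (∫₀² (1 - μ) - h) = θ (8 / (3π) - 2 / n)`; now let `θ → 1` and
`n → ∞`.
-/

open Filter Finset

noncomputable section

/-- The set of primes in `[1, x]`. -/
def primesUpTo (x : ℝ) : Finset ℕ := (Finset.Icc 1 ⌊x⌋₊).filter Nat.Prime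

/-- The Sato–Tate distribution function. -/
def STmu (α : ℝ) : ℝ :=
  (2 / Real.pi) * Real.arcsin (α / 2) + (1 / Real.pi) * Real.sin (2 * Real.arcsin (α / 2))

open Real Topology

lemma monotone_add_sin : Monotone fun φ : ℝ => φ + sin φ := by
  intro φ ψ h
  have := abs_sin_sub_sin_le ψ φ
  rw [abs_of_nonneg (sub_nonneg.2 h)] at this
  linarith [neg_abs_le (sin ψ - sin φ)]

lemma monotone_STmu : Monotone STmu := fun α β hαβ => by
  have hφ : 2 * arcsin (α / 2) ≤ 2 * arcsin (β / 2) := by gcongr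
  have h := mul_le_mul_of_nonneg_left (monotone_add_sin hφ) (inv_pos.2 pi_pos).le
  convert h using 1 <;> rw [STmu] <;> ring

lemma continuous_STmu : Continuous STmu := by
  unfold STmu
  fun_prop

lemma STmu_zero : STmu 0 = 0 := by simp [STmu]

lemma STmu_two : STmu 2 = 1 := by simp [STmu, mul_div_cancel₀]

lemma STmu_eq_of_mem_Icc {α : ℝ} (hα : α / 2 ∈ Set.Icc (-1) 1) :
    STmu α = 2 / π * (arcsin (α / 2) + α / 2 * √(1 - (α / 2) ^ 2)) := by
  rw [STmu, sin_two_mul, sin_arcsin hα.1 hα.2, cos_arcsin]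
  ring

def stPrimitive (u : ℝ) : ℝ := u * arcsin u + √(1 - u ^ 2) - √(1 - u ^ 2) ^ 3 / 3

lemma stPrimitive_zero : stPrimitive 0 = 2 / 3 := by norm_num [stPrimitive]

lemma stPrimitive_one : stPrimitive 1 = π / 2 := by simp [stPrimitive]

lemma hasDerivAt_stPrimitive {u : ℝ} (hu : u ∈ Set.Ioo (-1) 1) :
    HasDerivAt stPrimitive (arcsin u + u * √(1 - u ^ 2)) u := by
  have hpos : 0 < 1 - u ^ 2 := by nlinarith [hu.1, hu.2]
  have hsqrt : HasDerivAt (fun u => √(1 - u ^ 2)) (-(2 * u) / (2 * √(1 - u ^ 2))) u := by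
    simpa using ((hasDerivAt_pow 2 u).const_sub 1).sqrt hpos.ne'
  have harcsin := hasDerivAt_arcsin (x := u) (by linarith [hu.1]) (by linarith [hu.2])
  refine ((((hasDerivAt_id u).mul harcsin).add hsqrt).sub
    ((hsqrt.pow 3).div_const 3)).congr_deriv ?_
  simp only [id]
  field_simp
  ring

lemma hasDerivAt_sub_stPrimitive {α : ℝ} (hα : α ∈ Set.Ioo (-2) 2) :
    HasDerivAt (fun α => α - 4 / π * stPrimitive (α / 2)) (1 - STmu α) α := by
  have hu : α / 2 ∈ Set.Ioo (-1) 1 := ⟨by linarith [hα.1], by linarith [hα.2]⟩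
  refine ((hasDerivAt_id α).sub (((hasDerivAt_stPrimitive hu).comp α
    ((hasDerivAt_id α).div_const 2)).const_mul (4 / π))).congr_deriv ?_
  rw [STmu_eq_of_mem_Icc (Set.Ioo_subset_Icc_self hu)]
  ring

lemma integral_one_sub_STmu : ∫ α in (0 : ℝ)..2, (1 - STmu α) = 8 / (3 * π) := by
  rw [intervalIntegral.integral_eq_sub_of_hasDerivAt_of_le zero_le_two
    (by unfold stPrimitive; fun_prop)
    (fun α hα => hasDerivAt_sub_stPrimitive ⟨by linarith [hα.1], hα.2⟩)
    ((continuous_const.sub continuous_STmu).intervalIntegrable _ _)]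
  rw [div_self two_ne_zero, zero_div, stPrimitive_one, stPrimitive_zero]
  field_simp
  ring

theorem AntitoneOn.integral_le_mul_sum {g : ℝ → ℝ} {L : ℝ} (hL : 0 < L)
    (hg : AntitoneOn g (Set.Icc 0 L)) {n : ℕ} (hn : 0 < n) :
    ∫ t in (0 : ℝ)..L, g t ≤ L / n * ∑ i ∈ range n, g (i * (L / n)) := by
  have hh : 0 < L / n := by positivity
  have hnL : (n : ℝ) * (L / n) = L := by field_simp
  have hmaps : Set.MapsTo (· * (L / n)) (Set.Icc 0 (0 + n)) (Set.Icc 0 L) := fun t ht => by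
    rw [zero_add] at ht
    exact ⟨by nlinarith [ht.1], (mul_le_mul_of_nonneg_right ht.2 hh.le).trans_eq hnL⟩
  have key := AntitoneOn.integral_le_sum (x₀ := 0) (a := n) (f := fun t => g (t * (L / n)))
    fun s hs t ht hst => hg (hmaps hs) (hmaps ht) (mul_le_mul_of_nonneg_right hst hh.le)
  rw [zero_add, intervalIntegral.integral_comp_mul_right _ hh.ne', zero_mul, hnL,
    smul_eq_mul] at key
  simp only [zero_add] at key
  rwa [inv_mul_le_iff₀ hh] at key

lemma eight_div_three_pi_sub_le_riemannSum {n : ℕ} (hn : 0 < n) :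
    8 / (3 * π) - 2 / n ≤ 2 / n * ∑ i ∈ Ico 1 n, (1 - STmu (i * (2 / n))) := by
  have h := integral_one_sub_STmu.symm.trans_le <| AntitoneOn.integral_le_mul_sum two_pos
    (fun s _ t _ hst => sub_le_sub_left (monotone_STmu hst) 1) hn
  rw [range_eq_Ico, sum_eq_sum_Ico_succ_bot hn] at h
  simp only [Nat.cast_zero, zero_mul, STmu_zero, sub_zero] at h
  linarith

lemma mul_card_filter_lt_le {h c : ℝ} (hh : 0 < h) (hc : 0 ≤ c) (n : ℕ) :
    h * #((Ico 1 n).filter fun i : ℕ => i * h < c) ≤ c := by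
  have hsub : (Ico 1 n).filter (fun i : ℕ => i * h < c) ⊆ Icc 1 ⌊c / h⌋₊ := fun i hi => by
    rw [mem_filter, mem_Ico] at hi
    exact mem_Icc.2 ⟨hi.1.1, Nat.le_floor ((le_div_iff₀ hh).2 hi.2.le)⟩
  have hcard : (#((Ico 1 n).filter fun i : ℕ => i * h < c) : ℝ) ≤ c / h :=
    calc (#((Ico 1 n).filter fun i : ℕ => i * h < c) : ℝ) ≤ ⌊c / h⌋₊ := by
          exact_mod_cast (card_le_card hsub).trans_eq (Nat.card_Icc 1 _)
      _ ≤ c / h := Nat.floor_le (by positivity)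
  rwa [le_div_iff₀ hh, mul_comm] at hcard

lemma mul_sum_card_filter_lt_le_sum {ι : Type*} {s : Finset ι} {a : ι → ℝ}
    (ha : ∀ p ∈ s, 0 ≤ a p) {h : ℝ} (hh : 0 < h) (n : ℕ) :
    h * ∑ i ∈ Ico 1 n, (#(s.filter fun p => i * h < a p) : ℝ) ≤ ∑ p ∈ s, a p := by
  have hswap : ∑ i ∈ Ico 1 n, #(s.filter fun p => i * h < a p) =
      ∑ p ∈ s, #((Ico 1 n).filter fun i : ℕ => i * h < a p) := by
    simp only [card_filter]
    exact sum_comm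
  rw [← Nat.cast_sum, hswap, Nat.cast_sum, mul_sum]
  exact sum_le_sum fun p hp => mul_card_filter_lt_le hh (ha p hp) n

lemma log_mul_sum_filter_lt_le {s : Finset ℕ} {a : ℕ → ℝ} (ha : ∀ p ∈ s, 0 ≤ a p) {y : ℝ}
    (hy : 0 < y) : log y * ∑ p ∈ s.filter (fun p : ℕ => y < p), a p ≤ ∑ p ∈ s, a p * log p := by
  rw [mul_sum, sum_filter]
  refine sum_le_sum fun p hp => ?_
  split_ifs with hyp
  · rw [mul_comm]
    exact mul_le_mul_of_nonneg_left (log_le_log hy hyp.le) (ha p hp)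
  · exact mul_nonneg (ha p hp) (log_natCast_nonneg p)

lemma card_sub_le_card_filter_lt {s : Finset ℕ} (hs : ∀ p ∈ s, 1 ≤ p) {y : ℝ} (hy : 0 ≤ y) :
    (#s : ℝ) - y ≤ #(s.filter fun p : ℕ => y < p) := by
  have hsub : s ⊆ s.filter (fun p : ℕ => y < p) ∪ Icc 1 ⌊y⌋₊ := fun p hp => by
    rcases lt_or_ge y p with hyp | hpy
    · exact mem_union_left _ (mem_filter.2 ⟨hp, hyp⟩)
    · exact mem_union_right _ (mem_Icc.2 ⟨hs p hp, Nat.le_floor hpy⟩)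
  have hcard := (card_le_card hsub).trans (card_union_le _ _)
  rw [Nat.card_Icc, add_tsub_cancel_right] at hcard
  have : (#s : ℝ) ≤ #(s.filter fun p : ℕ => y < p) + ⌊y⌋₊ := by exact_mod_cast hcard
  linarith [Nat.floor_le hy]

lemma prime_of_mem_primesUpTo {p : ℕ} {x : ℝ} (hp : p ∈ primesUpTo x) : p.Prime :=
  (mem_filter.1 hp).2

lemma one_le_of_mem_primesUpTo {p : ℕ} {x : ℝ} (hp : p ∈ primesUpTo x) : 1 ≤ p :=
  (prime_of_mem_primesUpTo hp).one_le

lemma natCast_le_of_mem_primesUpTo {p : ℕ} {x : ℝ} (hx : 0 ≤ x) (hp : p ∈ primesUpTo x) :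
    (p : ℝ) ≤ x :=
  (Nat.cast_le.2 (mem_Icc.1 (mem_filter.1 hp).1).2).trans (Nat.floor_le hx)

def weightedChebyshev (a : ℕ → ℝ) (x : ℝ) : ℝ := ∑ p ∈ primesUpTo x, a p * log p

lemma log_mul_sum_card_sub_le_weightedChebyshev {a : ℕ → ℝ} (ha : ∀ p, p.Prime → 0 ≤ a p)
    (x : ℝ) {y h : ℝ} (hy : 1 ≤ y) (hh : 0 < h) (n : ℕ) :
    log y * (h * ∑ i ∈ Ico 1 n, ((#((primesUpTo x).filter fun p => i * h < a p) : ℝ) - y)) ≤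
      weightedChebyshev a x := by
  set Q := (primesUpTo x).filter fun p : ℕ => y < p
  have haP : ∀ p ∈ primesUpTo x, 0 ≤ a p := fun p hp => ha p (prime_of_mem_primesUpTo hp)
  calc log y * (h * ∑ i ∈ Ico 1 n, ((#((primesUpTo x).filter fun p => i * h < a p) : ℝ) - y))
      ≤ log y * (h * ∑ i ∈ Ico 1 n, (#(Q.filter fun p => i * h < a p) : ℝ)) := by
        gcongr with i
        · exact log_nonneg hy
        · rw [filter_comm]
          exact card_sub_le_card_filter_lt
            (fun p hp => one_le_of_mem_primesUpTo (mem_filter.1 hp).1) (by linarith)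
    _ ≤ log y * ∑ p ∈ Q, a p := by
        gcongr
        · exact log_nonneg hy
        · exact mul_sum_card_filter_lt_le_sum (fun p hp => haP p (mem_filter.1 hp).1) hh n
    _ ≤ weightedChebyshev a x := log_mul_sum_filter_lt_le haP (by linarith)

lemma tendsto_log_div_mul_rpow {θ : ℝ} (hθ : θ < 1) :
    Tendsto (fun x => log x / x * x ^ θ) atTop (𝓝 0) := by
  refine (isLittleO_log_rpow_atTop (sub_pos.2 hθ)).tendsto_div_nhds_zero.congr' ?_
  filter_upwards [eventually_gt_atTop 0] with x hx
  rw [rpow_sub hx, rpow_one]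
  field_simp

def SatoTateLaw (a : ℕ → ℝ) : Prop :=
  ∀ α ∈ Set.Icc (0 : ℝ) 2,
    Tendsto (fun x : ℝ => log x / x * #((primesUpTo x).filter fun p => a p ≤ α)) atTop
      (𝓝 (STmu α))

namespace SatoTateLaw

variable {a : ℕ → ℝ}

lemma tendsto_log_div_mul_card_primesUpTo (hST : SatoTateLaw a)
    (ha : ∀ p : ℕ, p.Prime → a p ∈ Set.Icc (0 : ℝ) 2) :
    Tendsto (fun x => log x / x * #(primesUpTo x)) atTop (𝓝 1) := by
  have h := hST 2 ⟨zero_le_two, le_rfl⟩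
  rw [STmu_two] at h
  refine h.congr fun x => ?_
  rw [filter_true_of_mem fun p hp => (ha p (prime_of_mem_primesUpTo hp)).2]

lemma tendsto_log_div_mul_card_lt (hST : SatoTateLaw a)
    (ha : ∀ p : ℕ, p.Prime → a p ∈ Set.Icc (0 : ℝ) 2) {t : ℝ} (ht : t ∈ Set.Icc (0 : ℝ) 2) :
    Tendsto (fun x => log x / x * #((primesUpTo x).filter fun p => t < a p)) atTop
      (𝓝 (1 - STmu t)) := by
  refine ((hST.tendsto_log_div_mul_card_primesUpTo ha).sub (hST t ht)).congr fun x => ?_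
  have hsplit := card_filter_add_card_filter_not (s := primesUpTo x) fun p => a p ≤ t
  simp only [not_le] at hsplit
  rw [← hsplit, Nat.cast_add]
  ring

lemma isCoboundedUnder_ge (hST : SatoTateLaw a)
    (ha : ∀ p : ℕ, p.Prime → a p ∈ Set.Icc (0 : ℝ) 2) :
    IsCoboundedUnder (· ≥ ·) atTop fun x => 1 / x * weightedChebyshev a x := by
  have h2 := (hST.tendsto_log_div_mul_card_primesUpTo ha).const_mul 2
  rw [mul_one] at h2
  refine isCoboundedUnder_ge_of_eventually_le atTop (x := 3) ?_
  filter_upwards [h2.eventually_le_const (by norm_num : (2 : ℝ) < 3), eventually_ge_atTop 1]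
    with x hx3 hx1
  have hsum : weightedChebyshev a x ≤ #(primesUpTo x) * (2 * log x) := by
    rw [← nsmul_eq_mul]
    refine sum_le_card_nsmul _ _ _ fun p hp => ?_
    have hlog : log p ≤ log x := log_le_log (by exact_mod_cast one_le_of_mem_primesUpTo hp)
      (natCast_le_of_mem_primesUpTo (by linarith) hp)
    have hap := ha p (prime_of_mem_primesUpTo hp)
    nlinarith [hap.1, hap.2, log_natCast_nonneg p]
  calc 1 / x * weightedChebyshev a x ≤ 1 / x * (#(primesUpTo x) * (2 * log x)) := by gcongr
    _ = 2 * (log x / x * #(primesUpTo x)) := by ring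
    _ ≤ 3 := hx3

lemma mul_sub_le_liminf (hST : SatoTateLaw a) (ha : ∀ p : ℕ, p.Prime → a p ∈ Set.Icc (0 : ℝ) 2)
    {θ : ℝ} (hθ₀ : 0 ≤ θ) (hθ₁ : θ < 1) {n : ℕ} (hn : 0 < n) :
    θ * (8 / (3 * π) - 2 / n) ≤ liminf (fun x => 1 / x * weightedChebyshev a x) atTop := by
  set h : ℝ := 2 / n with h_def
  have hh : 0 < h := by positivity
  have hlevel : ∀ i ∈ Ico 1 n, (i : ℝ) * h ∈ Set.Icc (0 : ℝ) 2 := fun i hi => by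
    refine ⟨by positivity, ?_⟩
    rw [h_def, mul_div_assoc', div_le_iff₀ (by positivity)]
    have : (i : ℝ) ≤ n := by exact_mod_cast (mem_Ico.1 hi).2.le
    linarith
  set F : ℝ → ℝ := fun x => θ * (h * ∑ i ∈ Ico 1 n,
    (log x / x * #((primesUpTo x).filter fun p => i * h < a p) - log x / x * x ^ θ))
  have hF : Tendsto F atTop (𝓝 (θ * (h * ∑ i ∈ Ico 1 n, (1 - STmu (i * h) - 0)))) :=
    ((tendsto_finsetSum _ fun i hi => (hST.tendsto_log_div_mul_card_lt ha (hlevel i hi)).sub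
      (tendsto_log_div_mul_rpow hθ₁)).const_mul h).const_mul θ
  have hFS : F ≤ᶠ[atTop] fun x => 1 / x * weightedChebyshev a x := by
    filter_upwards [eventually_ge_atTop 1] with x hx
    have hx₀ : 0 < x := by linarith
    have hlower := log_mul_sum_card_sub_le_weightedChebyshev (fun p hp => (ha p hp).1) x
      (one_le_rpow hx hθ₀) hh n
    rw [log_rpow hx₀] at hlower
    calc F x = 1 / x * (θ * log x * (h * ∑ i ∈ Ico 1 n,
          ((#((primesUpTo x).filter fun p => i * h < a p) : ℝ) - x ^ θ))) := by
          simp only [F, mul_sum]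
          exact sum_congr rfl fun i _ => by field_simp
      _ ≤ 1 / x * weightedChebyshev a x := by gcongr
  calc θ * (8 / (3 * π) - 2 / n) ≤ θ * (h * ∑ i ∈ Ico 1 n, (1 - STmu (i * h) - 0)) := by
        simp only [sub_zero]
        exact mul_le_mul_of_nonneg_left (eight_div_three_pi_sub_le_riemannSum hn) hθ₀
    _ = liminf F atTop := hF.liminf_eq.symm
    _ ≤ liminf (fun x => 1 / x * weightedChebyshev a x) atTop :=
        liminf_le_liminf hFS hF.isBoundedUnder_ge (hST.isCoboundedUnder_ge ha)

end SatoTateLaw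

/-- If `a_p ∈ [0,2]` satisfies the Sato–Tate law
`(log x / x)·#{p ≤ x : a_p ≤ α} → μ(α)`, then
`liminf_{x→∞} (1/x) ∑_{p ≤ x} a_p log p ≥ 8/(3π) > 2/π`. -/
theorem stmt_15 (a : ℕ → ℝ)
    (ha : ∀ p : ℕ, p.Prime → a p ∈ Set.Icc (0 : ℝ) 2)
    (hST : ∀ α ∈ Set.Icc (0 : ℝ) 2,
      Tendsto (fun x : ℝ => (Real.log x / x) *
          (((primesUpTo x).filter (fun p => a p ≤ α)).card : ℝ))
        atTop (nhds (STmu α))) :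
    8 / (3 * Real.pi) ≤
      Filter.liminf (fun x : ℝ => (1 / x) * ∑ p ∈ primesUpTo x, a p * Real.log p) atTop ∧
    2 / Real.pi <
      Filter.liminf (fun x : ℝ => (1 / x) * ∑ p ∈ primesUpTo x, a p * Real.log p) atTop := by
  have hbound : ∀ᶠ n : ℕ in atTop, (1 - 1 / n) * (8 / (3 * π) - 2 / n) ≤
      liminf (fun x => 1 / x * weightedChebyshev a x) atTop := by
    filter_upwards [eventually_gt_atTop 0] with n hn
    have hn' : (0 : ℝ) < n := Nat.cast_pos.2 hn
    exact SatoTateLaw.mul_sub_le_liminf hST ha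
      (sub_nonneg.2 (div_le_one_of_le₀ (by exact_mod_cast hn) hn'.le))
      (sub_lt_self 1 (one_div_pos.2 hn')) hn
  have hlim : Tendsto (fun n : ℕ => (1 - 1 / n) * (8 / (3 * π) - 2 / n)) atTop
      (𝓝 (8 / (3 * π))) := by
    simpa using ((tendsto_const_div_atTop_nhds_zero_nat 1).const_sub 1).mul
      ((tendsto_const_div_atTop_nhds_zero_nat 2).const_sub (8 / (3 * π)))
  have h83 := le_of_tendsto hlim hbound
  refine ⟨h83, lt_of_lt_of_le ?_ h83⟩
  rw [div_lt_div_iff₀ pi_pos (by positivity)]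
  nlinarith [pi_pos]
end
end
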